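/- arXiv:1511.08023 — 2 statements merged into one kernel-verified Lean document; each statement's English description precedes it below -/
import Mathlib

section
/- The band element of a closed loop, defined as Band_k(γ) = (1/k!) Σ over partitions (k_1 ≤ ... ≤ k_m) of k of c(k_1,...,k_m) · Brac_{k_1}(γ)···Brac_{k_m}(γ), where c(k_1,...,k_m) is the number of permutations in S_k with cycle type (k_1,...,k_m), has Laurent polynomial x_{Band_k(γ)} = U_k(x_γ); equivalently the polynomial identity U_k(x) = (1/k!) Σ_{σ ∈ S_k} ∏_{cycles c of σ} T_{|c|}(x) holds in ℚ[x]. -/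
open Polynomial BigOperators

/-- Chebyshev polynomials of the first kind over `ℚ`:
`T 0 = 2`, `T 1 = X`, `T (k+2) = X * T (k+1) - T k`. -/
noncomputable def chebT : ℕ → Polynomial ℚ
  | 0 => 2
  | 1 => Polynomial.X
  | (k + 2) => Polynomial.X * chebT (k + 1) - chebT k

/-- Chebyshev polynomials of the second kind over `ℚ`:
`U 0 = 1`, `U 1 = X`, `U (k+2) = X * U (k+1) - U k`. -/
noncomputable def chebU : ℕ → Polynomial ℚ
  | 0 => 1
  | 1 => Polynomial.X
  | (k + 2) => Polynomial.X * chebU (k + 1) - chebU k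

/-!
At the infinitely many points `x = q + q⁻¹` (`q > 0`) one has `T_n(x) = q^n + q^(-n)` and
`U_n(x) = ∑_{i ≤ n} q^i q^(i-n)`. For any `x, y`, the product over all cycles `c` of `σ`,
fixed points included, of `x^|c| + y^|c|` is the sum of `x^|S| y^(n-|S|)` over the
`σ`-invariant sets `S`, because an invariant set is a union of cycles. Summing over `σ` and
exchanging the two sums, each `S` is counted once for each permutation stabilizing it, that is
`|S|! (n-|S|)!` times, which gives `n! ∑_m x^m y^(n-m)`.
-/
open Finset Equiv
open scoped Nat

theorem chebT_eq_dickson : ∀ n, chebT n = dickson 1 (1 : ℚ) n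
  | 0 => by rw [chebT, dickson_zero]; norm_num
  | 1 => by rw [chebT, dickson_one]
  | n + 2 => by
    rw [chebT, dickson_add_two, chebT_eq_dickson n, chebT_eq_dickson (n + 1), C_1, one_mul]

theorem chebT_eval_add_of_mul_eq_one {x y : ℚ} (h : x * y = 1) (n : ℕ) :
    (chebT n).eval (x + y) = x ^ n + y ^ n := by
  rw [chebT_eq_dickson, dickson_one_one_eval_add_inv x y h]

theorem chebU_eval_add_of_mul_eq_one {x y : ℚ} (h : x * y = 1) :
    ∀ n, (chebU n).eval (x + y) = ∑ i ∈ range (n + 1), x ^ i * y ^ (n - i)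
  | 0 => by simp [chebU]
  | 1 => by simp [chebU, sum_range_succ, add_comm]
  | n + 2 => by
    have step (m : ℕ) := geom_sum₂_succ_eq x y (n := m + 1)
    simp only [Nat.add_sub_cancel] at step
    rw [chebU, eval_sub, eval_mul, eval_X, chebU_eval_add_of_mul_eq_one h n,
      chebU_eval_add_of_mul_eq_one h (n + 1), step (n + 1), step n]
    linear_combination (∑ i ∈ range (n + 1), x ^ i * y ^ (n - i)) * h

theorem not_bddAbove_image_add_inv {K : Type*} [Field K] [LinearOrder K]
    [IsStrictOrderedRing K] :
    ¬ BddAbove ((fun q : K => q + q⁻¹) '' Set.Ioi 0) := by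
  rintro ⟨b, hb⟩
  have hq : (0 : K) < max b 0 + 1 := by positivity
  have := hb ⟨_, hq, rfl⟩
  linarith [le_max_left b 0, inv_pos.2 hq]

namespace Equiv.Perm

variable {α : Type*} {σ : Perm α}

theorem SameCycle.of_forall_apply_iff {p : α → Prop} (hp : ∀ a, p (σ a) ↔ p a) {a b : α}
    (hab : σ.SameCycle a b) (ha : p a) : p b := by
  obtain ⟨i, rfl⟩ := hab
  simpa [subtypePerm_zpow] using ((σ.subtypePerm hp ^ i) ⟨a, ha⟩).2

variable [Fintype α] [DecidableEq α] {S F : Finset α} {T : Finset (Perm α)}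

theorem biUnion_support_subset_support (hT : T ⊆ σ.cycleFactorsFinset) :
    T.biUnion support ⊆ σ.support :=
  biUnion_subset.2 fun _ hc => mem_cycleFactorsFinset_support_le (hT hc)

theorem apply_mem_union_biUnion_support_iff (hF : F ⊆ σ.supportᶜ)
    (hT : T ⊆ σ.cycleFactorsFinset) (a : α) :
    σ a ∈ F ∪ T.biUnion support ↔ a ∈ F ∪ T.biUnion support := by
  have hFa : σ a ∈ F ↔ a ∈ F := by
    by_cases ha : a ∈ σ.support
    · have hσa := apply_mem_support.2 ha
      exact iff_of_false (fun h => mem_compl.1 (hF h) hσa) (fun h => mem_compl.1 (hF h) ha)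
    · rw [notMem_support.1 ha]
  simp only [mem_union, mem_biUnion, hFa]
  exact or_congr_right (exists_congr fun c => and_congr_right fun hc =>
    mem_cycleFactorsFinset_support (hT hc) a)

theorem union_biUnion_support_sdiff_support (hF : F ⊆ σ.supportᶜ)
    (hT : T ⊆ σ.cycleFactorsFinset) : (F ∪ T.biUnion support) \ σ.support = F := by
  rw [union_sdiff_distrib, sdiff_eq_empty_iff_subset.2 (biUnion_support_subset_support hT),
    union_empty, Finset.sdiff_eq_self_iff_disjoint, ← subset_compl_iff_disjoint_right]
  exact hF

theorem filter_support_subset_union_biUnion_support (hF : F ⊆ σ.supportᶜ)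
    (hT : T ⊆ σ.cycleFactorsFinset) :
    {c ∈ σ.cycleFactorsFinset | c.support ⊆ F ∪ T.biUnion support} = T := by
  ext c
  simp only [mem_filter]
  refine ⟨fun ⟨hc, hcS⟩ => ?_,
    fun hc => ⟨hT hc, (subset_biUnion_of_mem _ hc).trans subset_union_right⟩⟩
  obtain ⟨a, ha⟩ := (mem_cycleFactorsFinset_iff.1 hc).1.nonempty_support
  rcases mem_union.1 (hcS ha) with haF | haT
  · exact absurd (mem_cycleFactorsFinset_support_le hc ha) (mem_compl.1 (hF haF))
  · obtain ⟨c', hc', hac'⟩ := mem_biUnion.1 haT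
    rwa [cycle_is_cycleOf ha hc, ← cycle_is_cycleOf hac' (hT hc')]

theorem sdiff_support_union_biUnion_filter (hS : ∀ a, σ a ∈ S ↔ a ∈ S) :
    S \ σ.support ∪ {c ∈ σ.cycleFactorsFinset | c.support ⊆ S}.biUnion support = S := by
  refine (union_subset sdiff_subset (biUnion_subset.2 fun c hc => (mem_filter.1 hc).2)).antisymm
    fun a ha => ?_
  by_cases haσ : a ∈ σ.support
  · refine mem_union_right _ (mem_biUnion.2 ⟨σ.cycleOf a, mem_filter.2
      ⟨cycleOf_mem_cycleFactorsFinset_iff.2 haσ, fun b hb => ?_⟩, ?_⟩)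
    · exact SameCycle.of_forall_apply_iff hS (mem_support_cycleOf_iff.1 hb).1 ha
    · exact mem_support_cycleOf_iff.2 ⟨SameCycle.refl _ _, haσ⟩
  · exact mem_union_left _ (mem_sdiff.2 ⟨ha, haσ⟩)

theorem card_union_biUnion_support (hF : F ⊆ σ.supportᶜ) (hT : T ⊆ σ.cycleFactorsFinset) :
    #(F ∪ T.biUnion support) = #F + ∑ c ∈ T, #c.support := by
  have hdisj : _root_.Disjoint F (T.biUnion support) := subset_compl_iff_disjoint_right.1
    (hF.trans (compl_subset_compl.2 (biUnion_support_subset_support hT)))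
  rw [card_union_of_disjoint hdisj, card_biUnion fun c hc d hd hcd =>
    disjoint_iff_disjoint_support.1 (cycleFactorsFinset_pairwise_disjoint σ (hT hc) (hT hd) hcd)]

theorem add_pow_mul_prod_cycleType_eq_sum {R : Type*} [CommSemiring R] (x y : R)
    (σ : Perm α) :
    (x + y) ^ (Fintype.card α - #σ.support) *
        (σ.cycleType.map fun ℓ => x ^ ℓ + y ^ ℓ).prod =
      ∑ S : Finset α with ∀ a, σ a ∈ S ↔ a ∈ S, x ^ #S * y ^ (Fintype.card α - #S) := by
  have hcard : Fintype.card α - #σ.support = #σ.supportᶜ := (card_compl _).symm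
  have hprod : (σ.cycleType.map fun ℓ => x ^ ℓ + y ^ ℓ).prod =
      ∏ c ∈ σ.cycleFactorsFinset, (x ^ #c.support + y ^ #c.support) := by
    rw [cycleType_def, Multiset.map_map]; rfl
  have hsum : ∑ c ∈ σ.cycleFactorsFinset, #c.support = #σ.support := by
    rw [← sum_cycleType, cycleType_def]; rfl
  rw [hcard, hprod, ← sum_pow_mul_eq_add_pow, prod_add, sum_mul_sum, ← sum_product']
  refine sum_nbij' (fun p => p.1 ∪ p.2.biUnion support)
    (fun S => (S \ σ.support, {c ∈ σ.cycleFactorsFinset | c.support ⊆ S})) ?_ ?_ ?_ ?_ ?_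
  · rintro ⟨F, T⟩ hp
    simp only [mem_product, mem_powerset] at hp
    exact mem_filter.2 ⟨mem_univ _, apply_mem_union_biUnion_support_iff hp.1 hp.2⟩
  · intro S _
    exact mem_product.2 ⟨mem_powerset.2 fun a ha => mem_compl.2 (mem_sdiff.1 ha).2,
      mem_powerset.2 (filter_subset _ _)⟩
  · rintro ⟨F, T⟩ hp
    simp only [mem_product, mem_powerset] at hp
    rw [union_biUnion_support_sdiff_support hp.1 hp.2,
      filter_support_subset_union_biUnion_support hp.1 hp.2]
  · intro S hS
    exact sdiff_support_union_biUnion_filter (mem_filter.1 hS).2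
  · rintro ⟨F, T⟩ hp
    simp only [mem_product, mem_powerset] at hp
    have hF := card_le_card hp.1
    have hT := sum_sdiff (f := fun c => #(support c)) hp.2
    -- the `y`-part consists of the fixed points outside `F` and the cycles outside `T`
    rw [prod_pow_eq_pow_sum, prod_pow_eq_pow_sum, card_union_biUnion_support hp.1 hp.2,
      show Fintype.card α - (#F + ∑ c ∈ T, #c.support) =
        #σ.supportᶜ - #F + ∑ c ∈ σ.cycleFactorsFinset \ T, #c.support by
        rw [card_compl] at hF ⊢; have := card_le_univ σ.support; omega]
    ring

theorem card_filter_forall_apply_mem_iff (S : Finset α) :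
    #{σ : Perm α | ∀ a, σ a ∈ S ↔ a ∈ S} = (#S)! * (Fintype.card α - #S)! := by
  have hstab := DomMulAct.stabilizer_card fun a => decide (a ∈ S)
  simp only [Fintype.prod_bool, decide_eq_true_eq, decide_eq_false_iff_not, Fintype.card_coe,
    Fintype.card_subtype_compl, funext_iff, Function.comp_apply, decide_eq_decide] at hstab
  rw [← hstab, Fintype.card_subtype]

theorem sum_add_pow_mul_prod_cycleType {R : Type*} [CommSemiring R] (x y : R) :
    ∑ σ : Perm α, (x + y) ^ (Fintype.card α - #σ.support) *
        (σ.cycleType.map fun ℓ => x ^ ℓ + y ^ ℓ).prod =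
      (Fintype.card α)! *
        ∑ m ∈ range (Fintype.card α + 1), x ^ m * y ^ (Fintype.card α - m) := by
  simp_rw [add_pow_mul_prod_cycleType_eq_sum]
  rw [sum_comm' (t' := univ) (s' := fun S => {σ : Perm α | ∀ a, σ a ∈ S ↔ a ∈ S})
    (by simp)]
  simp_rw [sum_const, card_filter_forall_apply_mem_iff, ← powerset_univ]
  rw [sum_powerset_apply_card
    (f := fun k => (k ! * (Fintype.card α - k)!) • (x ^ k * y ^ (Fintype.card α - k))),
    Finset.card_univ, mul_sum]
  refine sum_congr rfl fun m hm => ?_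
  rw [smul_smul, ← mul_assoc,
    Nat.choose_mul_factorial_mul_factorial (Nat.lt_succ_iff.1 (mem_range.1 hm)), nsmul_eq_mul]

end Equiv.Perm

/-- The band polynomial identity
`U_k(x) = (1/k!) Σ_{σ ∈ S_k} ∏_{cycles c of σ} T_{|c|}(x)` in `ℚ[x]`:
each permutation contributes `x^{#fixed points}` (since `T_1 = x`) times the
product of `T_{ℓ}` over its nontrivial cycle lengths `ℓ` (its cycle type). -/
theorem band_eq_chebU (k : ℕ) :
    (k.factorial : Polynomial ℚ) * chebU k =
      ∑ σ : Equiv.Perm (Fin k),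
        Polynomial.X ^ (k - σ.support.card) * (σ.cycleType.map chebT).prod := by
  refine eq_of_infinite_eval_eq _ _
    ((Set.infinite_of_not_bddAbove not_bddAbove_image_add_inv).mono ?_)
  rintro _ ⟨q, hq, rfl⟩
  have hqq : q * q⁻¹ = 1 := mul_inv_cancel₀ (ne_of_gt hq)
  simp only [Set.mem_ofPred_eq, eval_mul, eval_natCast, chebU_eval_add_of_mul_eq_one hqq,
    eval_finsetSum, eval_pow, eval_X, eval_multiset_prod, Multiset.map_map, Function.comp_def,
    chebT_eval_add_of_mul_eq_one hqq]
  simpa only [Fintype.card_fin] using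
    (Perm.sum_add_pow_mul_prod_cycleType (α := Fin k) q q⁻¹).symm
end

section
/- Leading-term linear independence: let A be the ring of Laurent polynomials in variables x_1,...,x_n, y_1,...,y_n over ℤ, graded by ℤ^n with deg(x_i)=e_i and deg(y_j)=−b_j for fixed vectors b_j. Suppose a family (f_g)_{g ∈ G}, G ⊆ ℤ^n, is such that each f_g has a unique term x^g not divisible by any y_j, and every other term of f_g has exponent vector of the form g + (non-negative integer combination of the columns of the extended matrix B̃). If the columns of the coefficient part of B̃ are the standard basis vectors (principal coefficients), then the family (f_g) is ℤ-linearly independent. -/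
theorem Finsupp.linearIndependent_of_apply_ne_zero {R α ι : Type*} [Ring R] [NoZeroDivisors R]
    (f : ι → α →₀ R) (p : ι → α) (hself : ∀ i, f i (p i) ≠ 0)
    (hother : ∀ i j, j ≠ i → f j (p i) = 0) : LinearIndependent R f := by
  rw [linearIndependent_iff']
  intro s c hsum i hi
  have hcoeff : ∑ j ∈ s, c j * f j (p i) = 0 := by
    simpa using DFunLike.congr_fun hsum (p i)
  rw [Finset.sum_eq_single_of_mem i hi fun j _ hji => by rw [hother i j hji, mul_zero]] at hcoeff
  exact (mul_eq_zero.1 hcoeff).resolve_right (hself i)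

/-- With principal coefficients the `y`-exponent of a term records the combination `m` of
columns of `B̃`, so the only `y`-free term is the leading one. -/
theorem fst_eq_of_snd_eq_zero_of_principal {n : ℕ} (B : Matrix (Fin n) (Fin n) ℤ) (g : Fin n → ℤ)
    (p : (Fin n → ℤ) × (Fin n → ℤ)) (hp0 : p.2 = 0)
    (hp : ∃ m : Fin n → ℕ, p.2 = (fun j => (m j : ℤ)) ∧
      p.1 = g + ∑ j, (m j : ℤ) • (fun l => B l j)) : p.1 = g := by
  obtain ⟨m, hm2, hm1⟩ := hp
  have hm : ∀ j, (m j : ℤ) = 0 := fun j => by simpa [hp0] using (congrFun hm2 j).symm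
  simpa [hm] using hm1

/-- Leading-term linear independence. Work in the Laurent polynomial ring in
variables `x₁,…,xₙ,y₁,…,yₙ` over `ℤ`, modelled as finitely supported functions
on the group of exponent vectors `(x-exponents, y-exponents)`. Let `B̃` be the
extended exchange matrix with top part `B` and principal coefficients (bottom
part the identity), so that its `j`-th column has x-part the `j`-th column of
`B` and y-part the standard basis vector `e_j`. Suppose each `f i` has the term
`x^{g i}` (y-free, i.e. y-exponent `0`) in its support, and every term of
`f i` has exponent vector `g i` plus a non-negative integer combination `m` of
the columns of `B̃`. If the `g i` are pairwise distinct, then the family `f` is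
`ℤ`-linearly independent. -/
theorem leading_term_linear_independent {n : ℕ} {ι : Type*}
    (B : Matrix (Fin n) (Fin n) ℤ)
    (g : ι → (Fin n → ℤ)) (hg : Function.Injective g)
    (f : ι → ((Fin n → ℤ) × (Fin n → ℤ)) →₀ ℤ)
    (h1 : ∀ i, (g i, (0 : Fin n → ℤ)) ∈ (f i).support)
    (h2 : ∀ i, ∀ p ∈ (f i).support, ∃ m : Fin n → ℕ,
      p.2 = (fun j => (m j : ℤ)) ∧
      p.1 = g i + ∑ j, (m j : ℤ) • (fun l => B l j)) :
    LinearIndependent ℤ f := by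
  refine Finsupp.linearIndependent_of_apply_ne_zero f (fun i => (g i, 0))
    (fun i => Finsupp.mem_support_iff.1 (h1 i)) fun i j hji => ?_
  by_contra hne
  have hgi : g i = g j :=
    fst_eq_of_snd_eq_zero_of_principal B (g j) _ rfl (h2 j _ (Finsupp.mem_support_iff.2 hne))
  exact hji (hg hgi).symm
end
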